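/- Let N be an equivalent norm on ℓ∞ (the space of bounded real sequences with the supremum norm) that is solid, strictly monotone, and normalized (N(e_n) = 1 for all n ∈ ℕ). Let L := N(𝟙), where 𝟙 is the constant-one sequence. If there exist k ∈ ℕ and l > 1 such that N(e_k + (1/L)·e_n) ≥ l for every n ∈ ℕ with n ≠ k, then N fails the local diameter two property: there exist a linear functional f : ℓ∞ → ℝ with sup{ f(x) : N(x) ≤ 1 } = 1, a δ > 0, and a d < 2, such that N(u − v) ≤ d whenever N(u) ≤ 1, N(v) ≤ 1, f(u) > 1 − δ and f(v) > 1 − δ. -/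
import Mathlib


open Classical in
/-- The `n`-th unit vector in the space of real sequences. -/
noncomputable def eVec {Γ : Type*} (γ : Γ) : Γ → ℝ := fun δ => if δ = γ then 1 else 0

/-- Membership in `ℓ∞`: bounded sequences. -/
def IsBddSeq (x : ℕ → ℝ) : Prop := ∃ M : ℝ, ∀ n, |x n| ≤ M

/-- The supremum norm of a sequence. -/
noncomputable def supNorm (x : ℕ → ℝ) : ℝ := ⨆ n, |x n|

lemma eVec_self (γ : ℕ) : eVec γ γ = 1 := by simp [eVec]

lemma eVec_ne {γ δ : ℕ} (h : δ ≠ γ) : eVec γ δ = 0 := by simp [eVec, h]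

lemma bddseq_eVec (γ : ℕ) : IsBddSeq (eVec γ) :=
  ⟨1, fun n => by unfold eVec; split <;> simp⟩

lemma bddseq_one : IsBddSeq (fun _ => (1:ℝ)) := ⟨1, fun _ => by simp⟩

lemma bddseq_add {x y : ℕ → ℝ} (hx : IsBddSeq x) (hy : IsBddSeq y) : IsBddSeq (x + y) := by
  obtain ⟨M, hM⟩ := hx; obtain ⟨K, hK⟩ := hy
  exact ⟨M + K, fun n => (abs_add_le _ _).trans (add_le_add (hM n) (hK n))⟩

lemma bddseq_smul (a : ℝ) {x : ℕ → ℝ} (hx : IsBddSeq x) : IsBddSeq (a • x) := by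
  obtain ⟨M, hM⟩ := hx
  exact ⟨|a| * M, fun n => by
    simp only [Pi.smul_apply, smul_eq_mul, abs_mul]
    exact mul_le_mul_of_nonneg_left (hM n) (abs_nonneg a)⟩

lemma bddseq_neg {x : ℕ → ℝ} (hx : IsBddSeq x) : IsBddSeq (-x) := by
  obtain ⟨M, hM⟩ := hx
  exact ⟨M, fun n => by simpa using hM n⟩

lemma bddseq_sub {x y : ℕ → ℝ} (hx : IsBddSeq x) (hy : IsBddSeq y) : IsBddSeq (x - y) := by
  rw [sub_eq_add_neg]; exact bddseq_add hx (bddseq_neg hy)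

/-- Let `N` be an equivalent norm on `ℓ∞` that is solid, strictly monotone, and
normalized, and let `L := N 𝟙` where `𝟙` is the constant-one sequence.  If there are
`k ∈ ℕ` and `l > 1` such that `N (e_k + (1/L) e_n) ≥ l` for all `n ≠ k`, then `N` fails
the local diameter two property. -/
theorem strictlyMonotone_linfty_fails_LD2P
    (N : (ℕ → ℝ) → ℝ)
    (hzero : ∀ x : ℕ → ℝ, IsBddSeq x → (N x = 0 ↔ x = 0))
    (hsmul : ∀ (a : ℝ) (x : ℕ → ℝ), IsBddSeq x → N (a • x) = |a| * N x)
    (htri : ∀ x y : ℕ → ℝ, IsBddSeq x → IsBddSeq y → N (x + y) ≤ N x + N y)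
    (hequiv : ∃ c C : ℝ, 0 < c ∧ 0 < C ∧ ∀ x : ℕ → ℝ, IsBddSeq x →
      c * supNorm x ≤ N x ∧ N x ≤ C * supNorm x)
    (hsolid : ∀ x y : ℕ → ℝ, IsBddSeq x → IsBddSeq y → (∀ n, |x n| ≤ |y n|) → N x ≤ N y)
    (hsm : ∀ x y : ℕ → ℝ, IsBddSeq x → IsBddSeq y → (∀ n, |y n| ≤ |x n|) →
      (∃ m, |y m| < |x m|) → N y < N x)
    (hnormalized : ∀ n : ℕ, N (eVec n) = 1)
    (L : ℝ) (hL : L = N (fun _ => 1))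
    (k : ℕ) (l : ℝ) (hl : 1 < l)
    (hinf : ∀ n : ℕ, n ≠ k → l ≤ N (eVec k + (1 / L) • eVec n)) :
    ∃ f : (ℕ → ℝ) →ₗ[ℝ] ℝ,
      sSup {r : ℝ | ∃ x : ℕ → ℝ, IsBddSeq x ∧ N x ≤ 1 ∧ f x = r} = 1 ∧
      ∃ δ : ℝ, 0 < δ ∧ ∃ d : ℝ, d < 2 ∧
        ∀ u v : ℕ → ℝ, IsBddSeq u → IsBddSeq v → N u ≤ 1 → N v ≤ 1 →
          1 - δ < f u → 1 - δ < f v → N (u - v) ≤ d := by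
  obtain ⟨c, C, hc, hC, hcC⟩ := hequiv
  have hsup1 : supNorm (fun _ => (1:ℝ)) = 1 := by
    unfold supNorm; simp
  have hLpos : 0 < L := by
    have h := (hcC _ bddseq_one).1
    rw [hsup1, mul_one] at h
    rw [hL]; linarith
  set one : ℕ → ℝ := fun _ => 1 with hone
  have honek : IsBddSeq (one - eVec k) := bddseq_sub bddseq_one (bddseq_eVec k)
  have hlt : N (one - eVec k) < L := by
    rw [hL]
    refine hsm one (one - eVec k) bddseq_one honek (fun n => ?_) ⟨k, ?_⟩
    · simp only [Pi.sub_apply, hone, eVec]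
      split <;> simp
    · simp [hone, eVec]
  set ε := L - N (one - eVec k) with hε
  have hεpos : 0 < ε := by simp only [hε]; linarith
  set δ := min ((1 - 1/l)/2) (ε/L) with hδ
  have hl0 : (0:ℝ) < l := by linarith
  have hδpos : 0 < δ := by
    apply lt_min
    · have : 1/l < 1 := by rw [div_lt_one hl0]; exact hl
      linarith
    · positivity
  have hδ1 : δ < 1 := by
    have h1 : δ ≤ (1 - 1/l)/2 := min_le_left _ _
    have : 0 < 1/l := by positivity
    linarith
  have hkey : 1 < (1 - δ) * l := by
    have h1 : δ ≤ (1 - 1/l)/2 := min_le_left _ _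
    have h2 : (1:ℝ)/l * l = 1 := by field_simp
    nlinarith
  -- |x k| ≤ 1 whenever N x ≤ 1
  have habs : ∀ x : ℕ → ℝ, IsBddSeq x → N x ≤ 1 → |x k| ≤ 1 := by
    intro x hx hNx
    have h1 : N (x k • eVec k) ≤ N x := by
      refine hsolid _ _ (bddseq_smul _ (bddseq_eVec k)) hx (fun n => ?_)
      simp only [Pi.smul_apply, smul_eq_mul, eVec]
      rcases eq_or_ne n k with rfl | hn
      · simp
      · simp [hn]
    have h2 : N (x k • eVec k) = |x k| := by
      rw [hsmul _ _ (bddseq_eVec k), hnormalized k, mul_one]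
    linarith
  -- off-diagonal coordinates are small
  have hsmall : ∀ x : ℕ → ℝ, IsBddSeq x → N x ≤ 1 → 1 - δ < x k →
      ∀ n, n ≠ k → |x n| ≤ x k / L := by
    intro x hx hNx hxk n hn
    by_contra hcon
    push_neg at hcon
    have hxk0 : 0 < x k := by linarith
    set y := x k • (eVec k + (1/L) • eVec n) with hy
    have hyb : IsBddSeq y :=
      bddseq_smul _ (bddseq_add (bddseq_eVec k) (bddseq_smul _ (bddseq_eVec n)))
    have h1 : N y ≤ N x := by
      refine hsolid _ _ hyb hx (fun m => ?_)
      simp only [hy, Pi.smul_apply, Pi.add_apply, smul_eq_mul]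
      rcases eq_or_ne m k with rfl | hmk
      · have hkn : ¬ (m = n) := fun h => hn h.symm
        rw [eVec_self, eVec_ne hkn]
        have : x m * (1 + 1/L * 0) = x m := by ring
        rw [this]
      · rcases eq_or_ne m n with rfl | hmn
        · rw [eVec_ne hmk, eVec_self]
          have : x k * (0 + 1/L * 1) = x k / L := by ring
          rw [this, abs_of_pos (div_pos hxk0 hLpos)]
          linarith
        · rw [eVec_ne hmk, eVec_ne hmn]
          simp
    have h2 : N y = x k * N (eVec k + (1/L) • eVec n) := by
      rw [hy, hsmul _ _ (bddseq_add (bddseq_eVec k) (bddseq_smul _ (bddseq_eVec n))),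
        abs_of_pos hxk0]
    have h3 : x k * l ≤ N y := by
      rw [h2]
      exact mul_le_mul_of_nonneg_left (hinf n hn) hxk0.le
    have h4 : (1 - δ) * l < x k * l := by
      exact mul_lt_mul_of_pos_right hxk hl0
    linarith
  refine ⟨LinearMap.proj k, ?_, δ, hδpos, δ + (2/L) * N (one - eVec k), ?_, ?_⟩
  · -- sSup = 1
    have hub : ∀ r ∈ {r : ℝ | ∃ x : ℕ → ℝ, IsBddSeq x ∧ N x ≤ 1 ∧ (LinearMap.proj k : (ℕ → ℝ) →ₗ[ℝ] ℝ) x = r},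
        r ≤ 1 := by
      rintro r ⟨x, hx, hNx, rfl⟩
      have := habs x hx hNx
      simp only [LinearMap.proj_apply]
      exact le_of_abs_le this
    have hmem : (1:ℝ) ∈ {r : ℝ | ∃ x : ℕ → ℝ, IsBddSeq x ∧ N x ≤ 1 ∧ (LinearMap.proj k : (ℕ → ℝ) →ₗ[ℝ] ℝ) x = r} :=
      ⟨eVec k, bddseq_eVec k, le_of_eq (hnormalized k), by simp [eVec]⟩
    exact le_antisymm (csSup_le ⟨1, hmem⟩ hub) (le_csSup ⟨1, hub⟩ hmem)
  · -- d < 2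
    have h1 : δ ≤ ε/L := min_le_right _ _
    have h2 : N (one - eVec k) = L - ε := by simp [hε]
    rw [h2]
    have h3 : (2/L) * (L - ε) = 2 - 2 * (ε/L) := by field_simp
    rw [h3]
    have : 0 < ε/L := by positivity
    linarith
  · intro u v hu hv hNu hNv hfu hfv
    simp only [LinearMap.proj_apply] at hfu hfv
    have huk1 : u k ≤ 1 := le_of_abs_le (habs u hu hNu)
    have hvk1 : v k ≤ 1 := le_of_abs_le (habs v hv hNv)
    have hun := hsmall u hu hNu hfu
    have hvn := hsmall v hv hNv hfv
    set w := δ • eVec k + (2/L) • (one - eVec k) with hw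
    have hwb : IsBddSeq w := bddseq_add (bddseq_smul _ (bddseq_eVec k)) (bddseq_smul _ honek)
    have h1 : N (u - v) ≤ N w := by
      refine hsolid _ _ (bddseq_sub hu hv) hwb (fun m => ?_)
      simp only [hw, Pi.sub_apply, Pi.add_apply, Pi.smul_apply, smul_eq_mul, hone]
      rcases eq_or_ne m k with rfl | hmk
      · rw [eVec_self]
        have : δ * 1 + 2/L * (1 - 1) = δ := by ring
        rw [this, abs_of_pos hδpos, abs_le]
        constructor <;> linarith
      · rw [eVec_ne hmk]
        have hval : δ * 0 + 2/L * (1 - 0) = 2/L := by ring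
        rw [hval, abs_of_pos (div_pos two_pos hLpos)]
        have h2 := hun m hmk
        have h3 := hvn m hmk
        have h4 : u k / L ≤ 1 / L := by
          apply div_le_div_of_nonneg_right huk1 hLpos.le
        have h5 : v k / L ≤ 1 / L := by
          apply div_le_div_of_nonneg_right hvk1 hLpos.le
        have h6 : |u m - v m| ≤ |u m| + |v m| := abs_sub _ _
        have h7 : (1:ℝ)/L + 1/L = 2/L := by ring
        linarith
    have h2 : N w ≤ δ + (2/L) * N (one - eVec k) := by
      have := htri _ _ (bddseq_smul δ (bddseq_eVec k)) (bddseq_smul (2/L) honek)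
      rw [hsmul _ _ (bddseq_eVec k), hsmul _ _ honek, hnormalized k,
        abs_of_pos hδpos, abs_of_pos (div_pos two_pos hLpos), mul_one] at this
      exact this
    linarith
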